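/- Every finite geometric meet semi-lattice L satisfies the Kruskal–Katona inequalities: 0 ≤ ∂_k(f_k) ≤ f_{k−1} for all k ≥ 0, where f_i is the number of elements of rank i+1. -/

import Mathlib

/-- The largest `m` with `C(m, k) ≤ n` (the leading term of the greedy cascade
representation). -/
def cascadeTop (k n : ℕ) : ℕ := Nat.findGreatest (fun m => Nat.choose m k ≤ n) (n + k + 1)

/-- `delSym k n = ∂^k(n)`: for `n > 0` with `k`-cascade representation
`n = C(n_k, k) + ... + C(n_i, i)` (computed greedily), `∂^k(n) = C(n_k - 1, k - 1)
+ ... + C(n_i - 1, i - 1)`, and `∂^k(0) = 0`. -/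
def delSym : ℕ → ℕ → ℕ
  | _, 0 => 0
  | 0, _ + 1 => 1
  | k + 1, n + 1 =>
    Nat.choose (cascadeTop (k + 1) (n + 1) - 1) k +
      delSym k (n + 1 - Nat.choose (cascadeTop (k + 1) (n + 1)) (k + 1))

/-- Auxiliary for Kruskal–Katona shadow: `delKKaux k n` is
`C(n_k, k-1) + ... + C(n_i, i-1)` for the `k`-cascade representation of `n`. -/
def delKKaux : ℕ → ℕ → ℕ
  | _, 0 => 0
  | 0, _ + 1 => 1
  | k + 1, n + 1 =>
    Nat.choose (cascadeTop (k + 1) (n + 1)) k +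
      delKKaux k (n + 1 - Nat.choose (cascadeTop (k + 1) (n + 1)) (k + 1))

/-- `delKK k n = ∂_k(n)`, computed via the `(k+1)`-cascade representation of `n`. -/
def delKK (k n : ℕ) : ℕ := delKKaux (k + 1) n

/-- The rank function is compatible with the covering relation. -/
def CoverRank {P : Type*} [PartialOrder P] (rk : P → ℕ) : Prop :=
  ∀ a b : P, a ⋖ b → rk b = rk a + 1

/-- The rank function is strictly monotone (the poset is graded). -/
def RankStrictMono {P : Type*} [PartialOrder P] (rk : P → ℕ) : Prop :=
  ∀ a b : P, a < b → rk a < rk b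

/-- The diamond property: every interval of rank 2 contains at least two
intermediate elements. -/
def DiamondProp {P : Type*} [PartialOrder P] (rk : P → ℕ) : Prop :=
  ∀ x y : P, x < y → rk y = rk x + 2 →
    ∃ a b : P, a ≠ b ∧ a ∈ Set.Ioo x y ∧ b ∈ Set.Ioo x y

/-- The parallelogram property (Definition of the paper): for every `x̂` and every
`y > x̂`, if the chain `x̂ = x 0 ⋖ x 1 ⋖ ... ⋖ x r` (`r > 0`) equals the closed
interval `[x̂, x r]`, is maximal w.r.t. inclusion among chain-intervals above `x̂`,
and `r` is less than the rank of `y` in `P(x̂)`, then whenever `x i < y` and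
`x (i+1) ≰ y` for some `0 < i ≤ r` (interpreting, for `i = r`, the latter as
`[x̂, y]` is not a chain), there exists `y'` with `x̂ ≤ y'`, `y' ⋖ y`,
`x (i-1) < y'` and `¬ x i ≤ y'`. -/
def ParallelogramProp {P : Type*} [PartialOrder P] (rk : P → ℕ) : Prop :=
  ∀ (xh y : P) (r : ℕ) (x : ℕ → P),
    xh < y → 0 < r → x 0 = xh →
    (∀ j, j < r → x j ⋖ x (j + 1)) →
    Set.Icc xh (x r) = {p | ∃ j ≤ r, p = x j} →
    (∀ z : P, x r < z → ¬ IsChain (· ≤ ·) (Set.Icc xh z)) →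
    r < rk y - rk xh →
    ∀ i, 0 < i → i ≤ r → x i < y →
      ((i < r ∧ ¬ x (i + 1) ≤ y) ∨ (i = r ∧ ¬ IsChain (· ≤ ·) (Set.Icc xh y))) →
      ∃ y' : P, xh ≤ y' ∧ y' ⋖ y ∧ x (i - 1) < y' ∧ ¬ x i ≤ y'

/-- Atomic: every element is the join of the atoms (rank-1 elements) below it. -/
def AtomicRk {L : Type*} [PartialOrder L] (rk : L → ℕ) : Prop :=
  ∀ l : L, IsLUB {a : L | rk a = 1 ∧ a ≤ l} l

/-!
Fix an injective weight `w` on `L`. For each `x`, keep the atoms below `x` that are not below the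
join of the `w`-earlier atoms below `x`. By atomicity these atoms `B x` still join to `x`, and
semimodularity makes them independent: every `S ⊆ B x` has `rk (⋁ S) = #S` and `B (⋁ S) = S`.
Hence `B` embeds the elements of rank `k + 1` as a `(k + 1)`-uniform set family whose shadow lies
in the image under `B` of the elements of rank `k`. By the Kruskal–Katona theorem that shadow is
at least the shadow of the colex initial segment of the same size `N`, which has `∂_k N` elements
by the cascade recursion `∂_{k+1} (C(m, k+2) + r) = C(m, k+1) + ∂_k r`.
-/

open Finset
open scoped FinsetFamily

theorem add_one_le_choose_add_add_one (n k : ℕ) : n + 1 ≤ (n + k + 1).choose (k + 1) := by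
  induction n with
  | zero => simp
  | succ n ih =>
    rw [show n + 1 + k + 1 = n + k + 1 + 1 by omega, Nat.choose_succ_succ']
    have := Nat.choose_pos (show k ≤ n + k + 1 by omega)
    omega

theorem cascadeTop_eq {k N m : ℕ} (hk : 0 < k) (h₁ : m.choose k ≤ N)
    (h₂ : N < (m + 1).choose k) : cascadeTop k N = m := by
  obtain ⟨k, rfl⟩ : ∃ j, k = j + 1 := ⟨k - 1, by omega⟩
  refine Nat.findGreatest_eq_iff.2 ⟨?_, fun _ => h₁, fun n hmn _ hn => ?_⟩
  · by_contra! hm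
    have := add_one_le_choose_add_add_one (m - k - 1) k
    rw [show m - k - 1 + k + 1 = m by omega] at this
    omega
  · exact (h₂.trans_le (Nat.choose_le_choose _ hmn)).not_ge hn

theorem delKK_eq_choose_add {k N m : ℕ} (hN : 0 < N) (h₁ : m.choose (k + 1) ≤ N)
    (h₂ : N < (m + 1).choose (k + 1)) :
    delKK k N = m.choose k + delKKaux k (N - m.choose (k + 1)) := by
  obtain ⟨N, rfl⟩ : ∃ j, N = j + 1 := ⟨N - 1, by omega⟩
  rw [delKK, delKKaux, cascadeTop_eq k.succ_pos h₁ h₂]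

theorem delKK_choose {k m : ℕ} (hkm : k + 1 ≤ m) : delKK k (m.choose (k + 1)) = m.choose k := by
  have := Nat.choose_pos (k.le_succ.trans hkm)
  rw [delKK_eq_choose_add (Nat.choose_pos hkm) le_rfl (by rw [Nat.choose_succ_succ']; omega),
    Nat.sub_self]
  simp only [delKKaux, add_zero]

theorem delKK_choose_add {k m r : ℕ} (hkm : k + 1 ≤ m) (hr : 0 < r)
    (hrm : r ≤ m.choose (k + 1)) :
    delKK (k + 1) (m.choose (k + 2) + r) = m.choose (k + 1) + delKK k r := by
  show delKK (k + 1) (m.choose (k + 1 + 1) + r) = _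
  have pascal := Nat.choose_succ_succ' m (k + 1)
  rcases hrm.lt_or_eq with hlt | rfl
  · rw [delKK_eq_choose_add (m := m) (by omega) (by omega) (by omega), Nat.add_sub_cancel_left]
    rfl
  · -- the leading cascade term is now `C(m + 1, k + 2)`, with nothing left over
    have := Nat.choose_pos (show k + 1 ≤ m + 1 by omega)
    have pascal' := Nat.choose_succ_succ' (m + 1) (k + 1)
    rw [delKK_eq_choose_add (m := m + 1) (by omega) (by omega) (by omega), delKK_choose hkm,
      Nat.choose_succ_succ', pascal, Nat.add_comm (m.choose (k + 1 + 1)), Nat.sub_self]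
    simp only [delKKaux]
    omega

theorem delKK_zero_of_pos {N : ℕ} (hN : 0 < N) : delKK 0 N = 1 := by
  rw [delKK_eq_choose_add hN (m := N) (by simp) (by simp)]
  simp [delKKaux]

theorem Finset.exists_mem_card_filter_le_eq {β : Type*} [LinearOrder β] (Q : Finset β) {m : ℕ}
    (hm : 0 < m) (hmQ : m ≤ #Q) : ∃ q ∈ Q, #{x ∈ Q | x ≤ q} = m := by
  induction Q using Finset.induction_on_max with
  | empty => simp at hmQ; omega
  | insert a Q hlt ih =>
    have ha : a ∉ Q := fun h => lt_irrefl a (hlt a h)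
    rw [card_insert_of_notMem ha] at hmQ
    rcases hmQ.lt_or_eq with hmQ | rfl
    · obtain ⟨q, hq, hcard⟩ := ih (by omega)
      refine ⟨q, mem_insert_of_mem hq, ?_⟩
      rwa [filter_insert, if_neg (hlt q hq).not_ge]
    · refine ⟨a, mem_insert_self a Q, ?_⟩
      rw [filter_true_of_mem fun x hx => ?_, card_insert_of_notMem ha]
      rcases mem_insert.1 hx with rfl | hx
      exacts [le_rfl, (hlt x hx).le]

namespace Finset.Colex

variable {n : ℕ}

theorem exists_card_initSeg_eq {r m : ℕ} (hm : 0 < m) (hmn : m ≤ n.choose r) :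
    ∃ s : Finset (Fin n), #s = r ∧ #(initSeg s) = m := by
  set Q := (powersetCard r (univ : Finset (Fin n))).map toColex.toEmbedding
  obtain ⟨q, hq, hcard⟩ := Q.exists_mem_card_filter_le_eq hm (by simpa [Q] using hmn)
  obtain ⟨s, hs, rfl⟩ := mem_map.1 hq
  obtain ⟨-, hsr⟩ := mem_powersetCard.1 hs
  refine ⟨s, hsr, ?_⟩
  rw [← hcard, ← card_map toColex.toEmbedding]
  congr 1
  ext q
  simp [Q, mem_initSeg, hsr, eq_comm]

theorem card_initSeg_le_choose {s : Finset (Fin n)} {m : Fin n} (hs : ∀ b ∈ s, b < m) :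
    #(initSeg s) ≤ (m : ℕ).choose #s := by
  rw [← Fin.card_Iio, ← card_powersetCard]
  refine card_le_card fun t ht => ?_
  obtain ⟨hcard, hle⟩ := mem_initSeg.1 ht
  exact mem_powersetCard.2 ⟨fun b hb => mem_Iio.2 (forall_lt_mono hle hs b hb), hcard.symm⟩

theorem toColex_le_toColex_iff_erase {α : Type*} [LinearOrder α] {s t : Finset α} {m : α}
    (hs : m ∈ s) (ht : m ∈ t) :
    toColex t ≤ toColex s ↔ toColex (t.erase m) ≤ toColex (s.erase m) := by
  simp only [← sdiff_singleton_eq_erase]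
  exact (toColex_sdiff_le_toColex_sdiff (singleton_subset_iff.2 ht)
    (singleton_subset_iff.2 hs)).symm

theorem card_initSeg_eq_choose_add {s : Finset (Fin n)} (hs : s.Nonempty) :
    #(initSeg s) = (s.max' hs : ℕ).choose #s + #(initSeg (s.erase (s.max' hs))) := by
  set m := s.max' hs
  have hms : m ∈ s := s.max'_mem hs
  have hlt : ∀ b ∈ s.erase m, b < m := fun b hb =>
    (s.le_max' b (mem_of_mem_erase hb)).lt_of_ne (ne_of_mem_erase hb)
  have hnot : ∀ u ∈ initSeg (s.erase m), m ∉ u := fun u hu hmu =>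
    lt_irrefl m (forall_lt_mono (mem_initSeg.1 hu).2 hlt m hmu)
  have hnotMem : {t ∈ initSeg s | m ∉ t} = powersetCard #s (Iio m) := by
    ext t
    simp only [mem_filter, mem_initSeg, mem_powersetCard]
    constructor
    · rintro ⟨⟨hcard, hle⟩, hmt⟩
      refine ⟨fun b hb => mem_Iio.2 ?_, hcard.symm⟩
      exact (forall_le_mono hle (fun c hc => s.le_max' c hc) b hb).lt_of_ne
        (ne_of_mem_of_not_mem hb hmt)
    · rintro ⟨hsub, hcard⟩
      have hmt : m ∉ t := fun h => lt_irrefl m (mem_Iio.1 (hsub h))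
      refine ⟨⟨hcard.symm, (toColex_lt_toColex_iff_exists_forall_lt.2
        ⟨m, hms, hmt, fun b hb _ => mem_Iio.1 (hsub hb)⟩).le⟩, hmt⟩
  have hmem : #{t ∈ initSeg s | m ∈ t} = #(initSeg (s.erase m)) := by
    refine card_nbij' (·.erase m) (insert m) (fun t ht => ?_) (fun u hu => ?_)
      (fun t ht => insert_erase (mem_filter.1 ht).2)
      (fun u hu => erase_insert (hnot u hu))
    · obtain ⟨ht, hmt⟩ := mem_filter.1 ht
      obtain ⟨hcard, hle⟩ := mem_initSeg.1 ht
      refine mem_initSeg.2 ⟨?_, (toColex_le_toColex_iff_erase hms hmt).1 hle⟩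
      rw [card_erase_of_mem hmt, card_erase_of_mem hms, hcard]
    · obtain ⟨hcard, hle⟩ := mem_initSeg.1 hu
      have hmu := hnot u hu
      refine mem_filter.2 ⟨mem_initSeg.2 ⟨?_, ?_⟩, mem_insert_self m u⟩
      · rw [card_insert_of_notMem hmu, ← hcard, card_erase_add_one hms]
      · rwa [toColex_le_toColex_iff_erase hms (mem_insert_self m u), erase_insert hmu]
  rw [← card_filter_add_card_filter_not (p := (m ∈ ·)), hmem, hnotMem, card_powersetCard,
    Fin.card_Iio, add_comm]

theorem card_initSeg_erase_min' {k : ℕ} {s : Finset (Fin n)} (hs : s.Nonempty)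
    (hcard : #s = k + 1) : #(initSeg (s.erase (s.min' hs))) = delKK k #(initSeg s) := by
  induction k generalizing s with
  | zero =>
    obtain ⟨a, rfl⟩ := card_eq_one.1 hcard
    rw [min'_singleton, erase_singleton, delKK_zero_of_pos (card_pos.2 initSeg_nonempty),
      card_eq_one]
    exact ⟨∅, by ext t; simp +contextual [mem_initSeg, eq_comm (a := 0)]⟩
  | succ k ih =>
    set m := s.max' hs
    set c := s.min' hs
    have hcm : c < m := s.min'_lt_max'_of_card (by omega)
    set s' := s.erase m
    have hcs' : c ∈ s' := mem_erase.2 ⟨hcm.ne, s.min'_mem hs⟩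
    have hs'card : #s' = k + 1 := by rw [card_erase_of_mem (s.max'_mem hs), hcard]; rfl
    have hmin : s'.min' ⟨c, hcs'⟩ = c :=
      le_antisymm (min'_le _ _ hcs') (min'_subset _ (erase_subset _ _))
    have hlt : ∀ b ∈ s', b < m := fun b hb =>
      (s.le_max' b (mem_of_mem_erase hb)).lt_of_ne (ne_of_mem_erase hb)
    have hkm : k + 1 ≤ m := by
      simpa [hs'card] using card_le_card fun b hb => mem_Iio.2 (hlt b hb)
    set u := s.erase c
    have hmu : m ∈ u := mem_erase.2 ⟨hcm.ne', s.max'_mem hs⟩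
    have hucard : #u = k + 1 := by rw [card_erase_of_mem (s.min'_mem hs), hcard]; rfl
    have hmax : u.max' ⟨m, hmu⟩ = m :=
      le_antisymm (max'_subset _ (erase_subset _ _)) (le_max' _ _ hmu)
    calc #(initSeg u) = (m : ℕ).choose (k + 1) + #(initSeg (s'.erase c)) := by
          rw [card_initSeg_eq_choose_add ⟨m, hmu⟩, hmax, hucard, erase_right_comm]
      _ = (m : ℕ).choose (k + 1) + delKK k #(initSeg s') := by
          rw [← ih ⟨c, hcs'⟩ hs'card, hmin]
      _ = delKK (k + 1) ((m : ℕ).choose (k + 2) + #(initSeg s')) :=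
          (delKK_choose_add hkm (card_pos.2 initSeg_nonempty)
            (hs'card ▸ card_initSeg_le_choose hlt)).symm
      _ = delKK (k + 1) #(initSeg s) := by rw [card_initSeg_eq_choose_add hs, hcard]

theorem card_shadow_initSeg {k : ℕ} {s : Finset (Fin n)} (hcard : #s = k + 1) :
    #(∂ (initSeg s)) = delKK k #(initSeg s) := by
  have hs : s.Nonempty := card_pos.1 (by omega)
  rw [shadow_initSeg hs, card_initSeg_erase_min' hs hcard]

end Finset.Colex

theorem Finset.shadow_map_mapEmbedding {α β : Type*} [DecidableEq α] [DecidableEq β]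
    (f : α ↪ β) (𝒜 : Finset (Finset α)) :
    ∂ (𝒜.map (mapEmbedding f).toEmbedding) = (∂ 𝒜).map (mapEmbedding f).toEmbedding := by
  ext t
  simp [mem_shadow_iff, ← map_erase, and_assoc]

theorem delKK_card_le_card_shadow_fin {n k : ℕ} {𝒜 : Finset (Finset (Fin n))}
    (h𝒜 : (𝒜 : Set (Finset (Fin n))).Sized (k + 1)) : delKK k #𝒜 ≤ #(∂ 𝒜) := by
  rcases 𝒜.eq_empty_or_nonempty with rfl | hne
  · exact Nat.zero_le _
  obtain ⟨s, hs, hcard⟩ :=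
    Colex.exists_card_initSeg_eq (card_pos.2 hne) (by simpa using h𝒜.card_le)
  calc delKK k #𝒜 = #(∂ (Colex.initSeg s)) := by rw [Colex.card_shadow_initSeg hs, hcard]
    _ ≤ #(∂ 𝒜) := kruskal_katona h𝒜 hcard.le (hs ▸ Colex.isInitSeg_initSeg)

theorem delKK_card_le_card_shadow {α : Type*} [Fintype α] [DecidableEq α] {k : ℕ}
    {𝒜 : Finset (Finset α)} (h𝒜 : (𝒜 : Set (Finset α)).Sized (k + 1)) :
    delKK k #𝒜 ≤ #(∂ 𝒜) := by
  set F := (mapEmbedding (Fintype.equivFin α).toEmbedding).toEmbedding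
  have hF : Set.Sized (k + 1) (↑(𝒜.map F) : Set (Finset (Fin (Fintype.card α)))) := by
    intro t ht
    obtain ⟨s, hs, rfl⟩ := mem_map.1 ht
    simpa [F] using h𝒜 hs
  simpa [F, shadow_map_mapEmbedding] using delKK_card_le_card_shadow_fin hF

def RankSemimodular {L : Type*} [SemilatticeInf L] (rk : L → ℕ) : Prop :=
  ∀ x y j : L, IsLUB ({x, y} : Set L) j → rk (x ⊓ y) + rk j ≤ rk x + rk y

theorem RankSemimodular.rk_eq_add_one_of_isLUB {L : Type*} [SemilatticeInf L] {rk : L → ℕ}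
    (hgeo : RankSemimodular rk) (hm : RankStrictMono rk) {y a j : L}
    (ha : rk a = 1) (hay : ¬ a ≤ y) (hj : IsLUB ({y, a} : Set L) j) : rk j = rk y + 1 := by
  have hinf : rk (y ⊓ a) < rk a := hm _ _ (inf_le_right.lt_of_ne fun h => hay (h ▸ inf_le_left))
  have hyj : rk y < rk j := hm _ _ ((hj.1 (Set.mem_insert y _)).lt_of_ne
    fun h => hay (h ▸ hj.1 (Set.mem_insert_of_mem _ rfl)))
  have := hgeo y a j hj
  omega

namespace GeometricSemilattice

open scoped Classical

variable {L : Type*} [SemilatticeInf L] [Fintype L] {rk : L → ℕ}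

variable (rk) in
noncomputable def atomsBelow (x : L) : Finset L := {a | rk a = 1 ∧ a ≤ x}

@[simp]
theorem mem_atomsBelow {x a : L} : a ∈ atomsBelow rk x ↔ rk a = 1 ∧ a ≤ x := by
  simp [atomsBelow]

theorem le_of_mem_atomsBelow {x a : L} (h : a ∈ atomsBelow rk x) : a ≤ x :=
  (mem_atomsBelow.1 h).2

theorem atomsBelow_mono {x y : L} (hyx : y ≤ x) : atomsBelow rk y ⊆ atomsBelow rk x :=
  fun _ ha => mem_atomsBelow.2 ⟨(mem_atomsBelow.1 ha).1, (le_of_mem_atomsBelow ha).trans hyx⟩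

variable [OrderBot L]

/-- The join of a finset of `L`, when it has an upper bound (and `⊥` otherwise). -/
noncomputable def lub (t : Finset L) : L :=
  if h : ({v | ∀ b ∈ t, b ≤ v} : Finset L).Nonempty then
    ({v | ∀ b ∈ t, b ≤ v} : Finset L).inf' h id
  else ⊥

theorem isLUB_lub {t : Finset L} {u : L} (hu : ∀ b ∈ t, b ≤ u) :
    IsLUB (t : Set L) (lub t) := by
  have hne : ({v | ∀ b ∈ t, b ≤ v} : Finset L).Nonempty := ⟨u, by simpa using hu⟩
  rw [lub, dif_pos hne]
  exact ⟨fun b hb => le_inf' hne id fun v hv => (mem_filter.1 hv).2 b hb,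
    fun v hv => inf'_le id (mem_filter.2 ⟨mem_univ v, fun b hb => hv hb⟩)⟩

theorem lub_eq_of_isLUB {t : Finset L} {x : L} (hx : IsLUB (t : Set L) x) : lub t = x :=
  (isLUB_lub fun _ hb => hx.1 hb).unique hx

theorem lub_mono {s t : Finset L} {u : L} (hst : s ⊆ t) (hu : ∀ b ∈ t, b ≤ u) :
    lub s ≤ lub t :=
  (isLUB_lub fun b hb => hu b (hst hb)).2 fun _ hb => (isLUB_lub hu).1 (hst hb)

theorem isLUB_pair_lub_insert {a : L} {t : Finset L} {u : L} (hu : ∀ b ∈ insert a t, b ≤ u) :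
    IsLUB ({lub t, a} : Set L) (lub (insert a t)) := by
  have ht := isLUB_lub fun b hb => hu b (mem_insert_of_mem hb)
  have hat := isLUB_lub hu
  rw [coe_insert] at hat
  refine ⟨?_, fun v hv => hat.2 ?_⟩
  · rintro _ (rfl | rfl)
    exacts [ht.2 fun b hb => hat.1 (Set.mem_insert_of_mem _ hb), hat.1 (Set.mem_insert _ _)]
  · rintro b (rfl | hb)
    exacts [hv (Set.mem_insert_of_mem _ rfl), (ht.1 hb).trans (hv (Set.mem_insert _ _))]

variable (rk) in
/-- The lexicographically first basis of atoms of `x` for the order `w`. -/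
noncomputable def greedyBasis (w : L → ℕ) (x : L) : Finset L :=
  {a ∈ atomsBelow rk x | ¬ a ≤ lub {b ∈ atomsBelow rk x | w b < w a}}

theorem greedyBasis_subset_atomsBelow (w : L → ℕ) (x : L) :
    greedyBasis rk w x ⊆ atomsBelow rk x :=
  filter_subset _ _

theorem isLUB_greedyBasis (hat : AtomicRk rk) (w : L → ℕ) (x : L) :
    IsLUB (greedyBasis rk w x : Set L) x := by
  refine ⟨fun a ha => le_of_mem_atomsBelow (greedyBasis_subset_atomsBelow w x ha),
    fun u hu => (hat x).2 fun a ha => ?_⟩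
  induction h : w a using Nat.strong_induction_on generalizing a with
  | _ N ih =>
    have ha' : a ∈ atomsBelow rk x := mem_atomsBelow.2 ha
    by_cases hb : a ∈ greedyBasis rk w x
    · exact hu hb
    · have hle : a ≤ lub {b ∈ atomsBelow rk x | w b < w a} := by
        simpa [greedyBasis, ha'] using hb
      refine hle.trans ((isLUB_lub (u := x) ?_).2 fun b hb => ?_)
      · exact fun b hb => le_of_mem_atomsBelow (mem_filter.1 hb).1
      · obtain ⟨hb, hwb⟩ := mem_filter.1 hb
        exact ih (w b) (h ▸ hwb) b (mem_atomsBelow.1 hb) rfl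

theorem lub_greedyBasis (hat : AtomicRk rk) (w : L → ℕ) (x : L) :
    lub (greedyBasis rk w x) = x :=
  lub_eq_of_isLUB (isLUB_greedyBasis hat w x)

theorem rk_lub_of_subset_greedyBasis (h0 : rk ⊥ = 0) (hm : RankStrictMono rk)
    (hgeo : RankSemimodular rk) {w : L → ℕ} (hw : Function.Injective w) {x : L} {S : Finset L}
    (hS : S ⊆ greedyBasis rk w x) : rk (lub S) = #S := by
  induction S using induction_on_max_value w with
  | empty => rw [lub_eq_of_isLUB (x := ⊥) (by simp), h0, card_empty]
  | insert a S haS hmax ih =>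
    have hSx : ∀ b ∈ insert a S, b ≤ x := fun b hb =>
      le_of_mem_atomsBelow (greedyBasis_subset_atomsBelow w x (hS hb))
    have ha := mem_filter.1 (hS (mem_insert_self a S))
    have hS_pref : S ⊆ {b ∈ atomsBelow rk x | w b < w a} := fun b hb =>
      mem_filter.2 ⟨greedyBasis_subset_atomsBelow w x (hS (mem_insert_of_mem hb)),
        (hmax b hb).lt_of_ne fun h => haS (hw h ▸ hb)⟩
    have hnle : ¬ a ≤ lub S := fun h =>
      ha.2 (h.trans (lub_mono hS_pref fun b hb => le_of_mem_atomsBelow (mem_filter.1 hb).1))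
    rw [hgeo.rk_eq_add_one_of_isLUB hm (mem_atomsBelow.1 ha.1).1 hnle (isLUB_pair_lub_insert hSx),
      ih ((subset_insert a S).trans hS), card_insert_of_notMem haS]

theorem card_greedyBasis (h0 : rk ⊥ = 0) (hm : RankStrictMono rk) (hat : AtomicRk rk)
    (hgeo : RankSemimodular rk) {w : L → ℕ} (hw : Function.Injective w) (x : L) :
    #(greedyBasis rk w x) = rk x := by
  rw [← rk_lub_of_subset_greedyBasis h0 hm hgeo hw subset_rfl, lub_greedyBasis hat]

theorem mem_greedyBasis_of_le {w : L → ℕ} {x y a : L} (hyx : y ≤ x)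
    (ha : a ∈ greedyBasis rk w x) (hay : a ≤ y) : a ∈ greedyBasis rk w y := by
  obtain ⟨ha, hnle⟩ := mem_filter.1 ha
  refine mem_filter.2 ⟨mem_atomsBelow.2 ⟨(mem_atomsBelow.1 ha).1, hay⟩, fun h => hnle ?_⟩
  exact h.trans (lub_mono (filter_subset_filter _ (atomsBelow_mono hyx))
    fun b hb => le_of_mem_atomsBelow (mem_filter.1 hb).1)

theorem greedyBasis_lub_of_subset (h0 : rk ⊥ = 0) (hm : RankStrictMono rk) (hat : AtomicRk rk)
    (hgeo : RankSemimodular rk) {w : L → ℕ} (hw : Function.Injective w) {x : L} {S : Finset L}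
    (hS : S ⊆ greedyBasis rk w x) : greedyBasis rk w (lub S) = S := by
  have hSx : ∀ b ∈ S, b ≤ x := fun b hb =>
    le_of_mem_atomsBelow (greedyBasis_subset_atomsBelow w x (hS hb))
  have hlub := isLUB_lub hSx
  refine (eq_of_subset_of_card_le (fun a ha => ?_) ?_).symm
  · exact mem_greedyBasis_of_le (hlub.2 hSx) (hS ha) (hlub.1 ha)
  · rw [card_greedyBasis h0 hm hat hgeo hw, rk_lub_of_subset_greedyBasis h0 hm hgeo hw hS]

theorem delKK_card_rank_succ_le (h0 : rk ⊥ = 0) (hm : RankStrictMono rk) (hat : AtomicRk rk)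
    (hgeo : RankSemimodular rk) (k : ℕ) :
    delKK k #{x | rk x = k + 1} ≤ #{x | rk x = k} := by
  set w : L → ℕ := fun x => Fintype.equivFin L x
  have hw : Function.Injective w := Fin.val_injective.comp (Fintype.equivFin L).injective
  have hinj : Function.Injective (greedyBasis rk w) :=
    Function.LeftInverse.injective (g := lub) (lub_greedyBasis hat w)
  set 𝒜 := ({x | rk x = k + 1} : Finset L).image (greedyBasis rk w)
  have h𝒜 : (𝒜 : Set (Finset L)).Sized (k + 1) := by
    simp only [𝒜, coe_image]
    rintro _ ⟨x, hx, rfl⟩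
    rw [card_greedyBasis h0 hm hat hgeo hw]
    simpa using hx
  have hshadow : ∂ 𝒜 ⊆ ({x | rk x = k} : Finset L).image (greedyBasis rk w) := by
    intro S hS
    obtain ⟨_, hB, a, ha, rfl⟩ := mem_shadow_iff.1 hS
    obtain ⟨x, hx, rfl⟩ := mem_image.1 hB
    have hsub := erase_subset a (greedyBasis rk w x)
    refine mem_image.2 ⟨lub _, ?_, greedyBasis_lub_of_subset h0 hm hat hgeo hw hsub⟩
    rw [mem_filter, rk_lub_of_subset_greedyBasis h0 hm hgeo hw hsub, card_erase_of_mem ha,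
      card_greedyBasis h0 hm hat hgeo hw, (mem_filter.1 hx).2]
    exact ⟨mem_univ _, rfl⟩
  calc delKK k #{x | rk x = k + 1} = delKK k #𝒜 := by rw [card_image_of_injective _ hinj]
    _ ≤ #(∂ 𝒜) := delKK_card_le_card_shadow h𝒜
    _ ≤ #{x | rk x = k} := (card_le_card hshadow).trans card_image_le

end GeometricSemilattice

theorem kruskalKatona_of_geometric_general {L : Type*} [SemilatticeInf L] [OrderBot L]
    [Fintype L] (rk : L → ℕ) (h0 : rk ⊥ = 0)
    (hm : RankStrictMono rk) (hat : AtomicRk rk)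
    (hgeo : ∀ x y j : L, IsLUB ({x, y} : Set L) j →
      rk (x ⊓ y) + rk j ≤ rk x + rk y)
    (f : ℕ → ℕ) (hf : ∀ i, f i = Nat.card {p : L | rk p = i}) :
    ∀ k : ℕ, delKK k (f (k + 1)) ≤ f k := by
  classical
  intro k
  simpa [hf, Nat.card_eq_fintype_card, Fintype.card_subtype] using
    GeometricSemilattice.delKK_card_rank_succ_le h0 hm hat hgeo k

/-- Every finite geometric meet semi-lattice satisfies the Kruskal–Katona
inequalities `∂_k(f_k) ≤ f_{k-1}` for all `k ≥ 0` (`f i` counts rank-`i`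
elements). -/
theorem kruskalKatona_of_geometric {L : Type*} [SemilatticeInf L] [OrderBot L]
    [Fintype L] (rk : L → ℕ) (h0 : rk ⊥ = 0) (hc : CoverRank rk)
    (hm : RankStrictMono rk) (hat : AtomicRk rk)
    (hgeo : ∀ x y j : L, IsLUB ({x, y} : Set L) j →
      rk (x ⊓ y) + rk j ≤ rk x + rk y)
    (f : ℕ → ℕ) (hf : ∀ i, f i = Nat.card {p : L | rk p = i}) :
    ∀ k : ℕ, delKK k (f (k + 1)) ≤ f k :=
  kruskalKatona_of_geometric_general rk h0 hm hat hgeo f hf
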